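/- Fix k ∈ ℕ, u ∈ B_R and v ∈ B_R with q(u) > 0 and q(v) > 0. Let D_k^{(1)}(u,v) := ∑_{i=0}^{k} ‖Ψ_{t_i}(v) − Ψ_{t_i}(u)‖₁ and M_k(u,v) := max_{0≤i≤k} ‖H Ψ_{t_i}(v) − H Ψ_{t_i}(u)‖_∞. Then: (a) if ε ≥ M_k(u,v), the probability that v ∈ S_k is at least exp(−D_k^{(1)}(u,v)·‖H‖₁/ε); (b) if d_o = d and H is invertible, then for every ε > 0 the probability that v ∈ S_k is at most exp(−D_k^{(1)}(u,v)/(2ε·‖H⁻¹‖₁)). -/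

import Mathlib

/-!
The event `v ∈ S_k` says that every noise vector `Z_i` lies in the sup-norm cube of radius `ε`
around `w_i = H (Ψ_{t_i} v - Ψ_{t_i} u)`. By independence and uniformity its probability is
`∏ᵢ ∏ⱼ (1 - |w_{ij}| / 2ε)⁺`. Each factor is at most `exp (-|w_{ij}| / 2ε)` (from `1 - x ≤ e^{-x}`),
and at least `exp (-|w_{ij}| / ε)` when `|w_{ij}| ≤ ε` (from `e^{-t} ≤ 1 - t/2` on `[0, 1]`).
Summing exponents, `∑ⱼ |w_{ij}| = ‖w_i‖₁` is compared with `‖Ψ_{t_i} v - Ψ_{t_i} u‖₁` through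
`‖H‖₁` and `‖H⁻¹‖₁`.
-/

open MeasureTheory ProbabilityTheory Set
open scoped ENNReal

noncomputable section

/-- The ℓ¹ norm on `ℝ^n`. -/
def norm1 {n : ℕ} (x : EuclideanSpace ℝ (Fin n)) : ℝ := ∑ j, |x j|

/-- The supremum norm on `ℝ^n`. -/
def normInf {n : ℕ} (x : EuclideanSpace ℝ (Fin n)) : ℝ := ⨆ j, |x j|

/-- The operator norm induced by the ℓ¹ norms. -/
def opNorm1 {n m : ℕ} (T : EuclideanSpace ℝ (Fin n) → EuclideanSpace ℝ (Fin m)) : ℝ :=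
  sSup ((fun x => norm1 (T x)) '' {x | norm1 x ≤ 1})

/-- The support of the smoothing distribution after observations `Y_0, …, Y_k`. -/
def smootherSupp {d dO : ℕ} {Ω : Type*}
    (Ψ : ℝ → EuclideanSpace ℝ (Fin d) → EuclideanSpace ℝ (Fin d))
    (H : EuclideanSpace ℝ (Fin d) →L[ℝ] EuclideanSpace ℝ (Fin dO))
    (q : EuclideanSpace ℝ (Fin d) → ℝ) (R h ε : ℝ)
    (u : EuclideanSpace ℝ (Fin d)) (Z : ℕ → Ω → EuclideanSpace ℝ (Fin dO))
    (k : ℕ) (ω : Ω) : Set (EuclideanSpace ℝ (Fin d)) :=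
  {x | ‖x‖ ≤ R ∧ 0 < q x ∧
    ∀ i ≤ k, normInf (H (Ψ (i * h) x) - (H (Ψ (i * h) u) + Z i ω)) ≤ ε}


lemma normInf_le_iff {n : ℕ} {ε : ℝ} (hε : 0 ≤ ε) (x : EuclideanSpace ℝ (Fin n)) :
    normInf x ≤ ε ↔ ∀ j, |x j| ≤ ε :=
  ⟨fun h j => (le_ciSup (Set.finite_range _).bddAbove j).trans h, fun h => Real.iSup_le h hε⟩

def toL1 (n : ℕ) : EuclideanSpace ℝ (Fin n) ≃L[ℝ] PiLp 1 (fun _ : Fin n => ℝ) :=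
  (PiLp.continuousLinearEquiv 2 ℝ _).trans (PiLp.continuousLinearEquiv 1 ℝ _).symm

lemma norm_toL1 {n : ℕ} (x : EuclideanSpace ℝ (Fin n)) : ‖toL1 n x‖ = norm1 x := by
  simp [toL1, PiLp.norm_eq_of_L1, norm1]

lemma opNorm1_eq_norm {n m : ℕ} (T : EuclideanSpace ℝ (Fin n) →L[ℝ] EuclideanSpace ℝ (Fin m)) :
    opNorm1 (fun x => T x) = ‖(toL1 n).arrowCongr (toL1 m) T‖ := by
  have hball : {x | norm1 x ≤ 1} = (toL1 n).symm '' Metric.closedBall 0 1 := by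
    ext x
    simp [ContinuousLinearEquiv.image_symm_eq_preimage, norm_toL1]
  rw [opNorm1, hball, image_image, ← ContinuousLinearMap.sSup_unitClosedBall_eq_norm]
  simp [norm_toL1]

lemma opNorm1_nonneg {n m : ℕ} (T : EuclideanSpace ℝ (Fin n) →L[ℝ] EuclideanSpace ℝ (Fin m)) :
    0 ≤ opNorm1 (fun x => T x) :=
  (opNorm1_eq_norm T).symm ▸ norm_nonneg _

lemma norm1_apply_le {n m : ℕ} (T : EuclideanSpace ℝ (Fin n) →L[ℝ] EuclideanSpace ℝ (Fin m))
    (x : EuclideanSpace ℝ (Fin n)) : norm1 (T x) ≤ opNorm1 (fun x => T x) * norm1 x := by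
  rw [opNorm1_eq_norm, ← norm_toL1, ← norm_toL1]
  simpa using ((toL1 n).arrowCongr (toL1 m) T).le_opNorm (toL1 n x)

lemma Real.volume_Icc_sub_add_inter_Icc (ε a : ℝ) :
    volume (Icc (a - ε) (a + ε) ∩ Icc (-ε) ε) = ENNReal.ofReal (2 * ε - |a|) := by
  rw [Icc_inter_Icc, Real.volume_Icc]
  congr 1
  rcases le_total 0 a with ha | ha
  · rw [abs_of_nonneg ha, max_eq_left (by linarith), min_eq_right (by linarith)]; ring
  · rw [abs_of_nonpos ha, max_eq_right (by linarith), min_eq_left (by linarith)]; ring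

section UniformCube

variable {ι : Type*} [Fintype ι]

lemma EuclideanSpace.volume_setOf_forall_mem (I : ι → Set ℝ) (hI : ∀ j, MeasurableSet (I j)) :
    volume {z : EuclideanSpace ℝ ι | ∀ j, z j ∈ I j} = ∏ j, volume (I j) := by
  have : {z : EuclideanSpace ℝ ι | ∀ j, z j ∈ I j} =
      (MeasurableEquiv.toLp 2 (ι → ℝ)).symm ⁻¹' univ.pi I := by
    ext z; simp
  rw [this, (EuclideanSpace.volume_preserving_symm_measurableEquiv_toLp ι).measure_preimage
    (MeasurableSet.univ_pi hI).nullMeasurableSet, volume_pi_pi]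

lemma measurableSet_setOf_forall_abs_sub_le (w : EuclideanSpace ℝ ι) (ε : ℝ) :
    MeasurableSet {z : EuclideanSpace ℝ ι | ∀ j, |w j - z j| ≤ ε} := by
  simp only [ofPred_forall]
  exact MeasurableSet.iInter fun j => measurableSet_le (by fun_prop) measurable_const

def uniformCube (ι : Type*) [Fintype ι] (ε : ℝ) : Measure (EuclideanSpace ℝ ι) :=
  (ENNReal.ofReal ((2 * ε) ^ Fintype.card ι))⁻¹ •
    volume.restrict {z : EuclideanSpace ℝ ι | ∀ j, |z j| ≤ ε}

/-- `ENNReal.ofReal` truncates at `0`, so the factors are `(1 - |wⱼ| / 2ε)⁺` without a `max`. -/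
lemma uniformCube_apply_cube {ε : ℝ} (hε : 0 < ε) (w : EuclideanSpace ℝ ι) :
    uniformCube ι ε {z | ∀ j, |w j - z j| ≤ ε} = ∏ j, ENNReal.ofReal (1 - |w j| / (2 * ε)) := by
  have h2ε : 0 < 2 * ε := by positivity
  have hcube : {z | ∀ j, |w j - z j| ≤ ε} ∩ {z : EuclideanSpace ℝ ι | ∀ j, |z j| ≤ ε} =
      {z | ∀ j, z j ∈ Icc (w j - ε) (w j + ε) ∩ Icc (-ε) ε} := by
    ext z
    simp only [mem_inter_iff, mem_ofPred_eq, mem_Icc_iff_abs_le, ← forall_and]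
    simp only [mem_Icc, abs_le]
  rw [uniformCube, Measure.smul_apply,
    Measure.restrict_apply (measurableSet_setOf_forall_abs_sub_le w ε), hcube,
    EuclideanSpace.volume_setOf_forall_mem _ fun j => measurableSet_Icc.inter measurableSet_Icc]
  simp only [Real.volume_Icc_sub_add_inter_Icc]
  rw [smul_eq_mul, ENNReal.ofReal_pow h2ε.le, ENNReal.inv_pow, ← ENNReal.ofReal_inv_of_pos h2ε,
    ← Finset.card_univ, ← Finset.prod_const, ← Finset.prod_mul_distrib]
  refine Finset.prod_congr rfl fun j _ => ?_
  rw [← ENNReal.ofReal_mul (inv_nonneg.2 h2ε.le)]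
  congr 1
  field_simp

end UniformCube

lemma Real.exp_neg_le_one_sub_half {t : ℝ} (ht0 : 0 ≤ t) (ht1 : t ≤ 1) :
    Real.exp (-t) ≤ 1 - t / 2 := by
  have hpos : 0 < 1 + t := by linarith
  calc Real.exp (-t) = (Real.exp t)⁻¹ := Real.exp_neg t
    _ ≤ (1 + t)⁻¹ := inv_anti₀ hpos (by linarith [Real.add_one_le_exp t])
    _ ≤ 1 - t / 2 := by rw [inv_le_iff_one_le_mul₀ hpos]; nlinarith

lemma ENNReal.ofReal_exp_neg_sum {ι : Type*} (s : Finset ι) (f : ι → ℝ) :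
    ENNReal.ofReal (Real.exp (-∑ i ∈ s, f i)) = ∏ i ∈ s, ENNReal.ofReal (Real.exp (-f i)) := by
  rw [← Finset.sum_neg_distrib, Real.exp_sum,
    ENNReal.ofReal_prod_of_nonneg fun _ _ => (Real.exp_pos _).le]

section CubeMass

variable {n : ℕ} {ε : ℝ}

lemma ofReal_exp_neg_norm1_div_le_prod (hε : 0 < ε) {x : EuclideanSpace ℝ (Fin n)}
    (hx : normInf x ≤ ε) :
    ENNReal.ofReal (Real.exp (-(norm1 x / ε))) ≤ ∏ j, ENNReal.ofReal (1 - |x j| / (2 * ε)) := by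
  rw [norm1, Finset.sum_div, ENNReal.ofReal_exp_neg_sum]
  refine Finset.prod_le_prod' fun j _ => ENNReal.ofReal_le_ofReal ?_
  have hxj := (normInf_le_iff hε.le x).1 hx j
  have h := Real.exp_neg_le_one_sub_half (div_nonneg (abs_nonneg (x j)) hε.le)
    ((div_le_one hε).2 hxj)
  calc Real.exp (-(|x j| / ε)) ≤ 1 - |x j| / ε / 2 := h
    _ = 1 - |x j| / (2 * ε) := by ring

lemma prod_le_ofReal_exp_neg_norm1_div (x : EuclideanSpace ℝ (Fin n)) :
    ∏ j, ENNReal.ofReal (1 - |x j| / (2 * ε)) ≤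
      ENNReal.ofReal (Real.exp (-(norm1 x / (2 * ε)))) := by
  rw [norm1, Finset.sum_div, ENNReal.ofReal_exp_neg_sum]
  exact Finset.prod_le_prod' fun j _ => ENNReal.ofReal_le_ofReal (Real.one_sub_le_exp_neg _)

end CubeMass

section Smoother

variable {d dO : ℕ} {Ω : Type*} {Ψ : ℝ → EuclideanSpace ℝ (Fin d) → EuclideanSpace ℝ (Fin d)}
  {H : EuclideanSpace ℝ (Fin d) →L[ℝ] EuclideanSpace ℝ (Fin dO)} {q : EuclideanSpace ℝ (Fin d) → ℝ}
  {R h ε : ℝ} {u v : EuclideanSpace ℝ (Fin d)} {Z : ℕ → Ω → EuclideanSpace ℝ (Fin dO)} {k : ℕ}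

lemma setOf_mem_smootherSupp_eq (hε : 0 ≤ ε) (hv : ‖v‖ ≤ R) (hqv : 0 < q v) :
    {ω | v ∈ smootherSupp Ψ H q R h ε u Z k ω} = ⋂ i ∈ Finset.range (k + 1),
      Z i ⁻¹' {z | ∀ j, |H (Ψ (i * h) v - Ψ (i * h) u) j - z j| ≤ ε} := by
  ext ω
  simp [smootherSupp, hv, hqv, normInf_le_iff hε, sub_sub]

lemma measure_mem_smootherSupp [MeasurableSpace Ω] {μ : Measure Ω} (hε : 0 < ε)
    (hv : ‖v‖ ≤ R) (hqv : 0 < q v) (hZmeas : ∀ i, Measurable (Z i)) (hZindep : iIndepFun Z μ)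
    (hZlaw : ∀ i, Measure.map (Z i) μ = uniformCube (Fin dO) ε) :
    μ {ω | v ∈ smootherSupp Ψ H q R h ε u Z k ω} = ∏ i ∈ Finset.range (k + 1),
      ∏ j, ENNReal.ofReal (1 - |H (Ψ (i * h) v - Ψ (i * h) u) j| / (2 * ε)) := by
  rw [setOf_mem_smootherSupp_eq hε.le hv hqv,
    hZindep.meas_biInter fun i _ => ⟨_, measurableSet_setOf_forall_abs_sub_le _ ε, rfl⟩]
  refine Finset.prod_congr rfl fun i _ => ?_
  rw [← Measure.map_apply (hZmeas i) (measurableSet_setOf_forall_abs_sub_le _ ε), hZlaw i,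
    uniformCube_apply_cube hε]

end Smoother

section Bounds

variable {d dO : ℕ} {ι : Type*} {ε : ℝ} (s : Finset ι) (y : ι → EuclideanSpace ℝ (Fin d))
  (T : EuclideanSpace ℝ (Fin d) →L[ℝ] EuclideanSpace ℝ (Fin dO))

lemma ofReal_exp_neg_sum_norm1_mul_le_prod (hε : 0 < ε) (hy : ∀ i ∈ s, normInf (T (y i)) ≤ ε) :
    ENNReal.ofReal (Real.exp (-(∑ i ∈ s, norm1 (y i)) * opNorm1 (fun x => T x) / ε)) ≤
      ∏ i ∈ s, ∏ j, ENNReal.ofReal (1 - |T (y i) j| / (2 * ε)) := by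
  have hsum : ∑ i ∈ s, norm1 (T (y i)) ≤ (∑ i ∈ s, norm1 (y i)) * opNorm1 (fun x => T x) := by
    rw [Finset.sum_mul]
    exact Finset.sum_le_sum fun i _ => (norm1_apply_le T (y i)).trans_eq (mul_comm _ _)
  calc _ ≤ ENNReal.ofReal (Real.exp (-∑ i ∈ s, norm1 (T (y i)) / ε)) := by
        refine ENNReal.ofReal_le_ofReal (Real.exp_le_exp.2 ?_)
        rw [neg_mul, neg_div, neg_le_neg_iff, ← Finset.sum_div]
        gcongr
    _ = ∏ i ∈ s, ENNReal.ofReal (Real.exp (-(norm1 (T (y i)) / ε))) :=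
        ENNReal.ofReal_exp_neg_sum _ _
    _ ≤ _ := Finset.prod_le_prod' fun i hi => ofReal_exp_neg_norm1_div_le_prod hε (hy i hi)

lemma prod_le_ofReal_exp_neg_sum_norm1_div
    (K : EuclideanSpace ℝ (Fin dO) →L[ℝ] EuclideanSpace ℝ (Fin d)) (hK : ∀ x, K (T x) = x) (hε : 0 ≤ ε) :
    ∏ i ∈ s, ∏ j, ENNReal.ofReal (1 - |T (y i) j| / (2 * ε)) ≤
      ENNReal.ofReal (Real.exp (-(∑ i ∈ s, norm1 (y i)) / (2 * ε * opNorm1 (fun x => K x)))) := by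
  have hsum : ∑ i ∈ s, norm1 (y i) ≤ (∑ i ∈ s, norm1 (T (y i))) * opNorm1 (fun x => K x) := by
    rw [Finset.sum_mul]
    refine Finset.sum_le_sum fun i _ => ?_
    simpa only [hK, mul_comm] using norm1_apply_le K (T (y i))
  calc _ ≤ ∏ i ∈ s, ENNReal.ofReal (Real.exp (-(norm1 (T (y i)) / (2 * ε)))) :=
        Finset.prod_le_prod' fun i _ => prod_le_ofReal_exp_neg_norm1_div _
    _ = ENNReal.ofReal (Real.exp (-∑ i ∈ s, norm1 (T (y i)) / (2 * ε))) :=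
        (ENNReal.ofReal_exp_neg_sum _ _).symm
    _ ≤ _ := by
        refine ENNReal.ofReal_le_ofReal (Real.exp_le_exp.2 ?_)
        rw [neg_div, neg_le_neg_iff, ← Finset.sum_div, mul_comm, ← div_div]
        gcongr
        exact div_le_of_le_mul₀ (opNorm1_nonneg K)
          (Finset.sum_nonneg fun i _ => (norm_toL1 _).symm ▸ norm_nonneg _) hsum

end Bounds

theorem prob_in_smoother_support_bounds_general {d dO : ℕ}
    (R : ℝ)
    (Ψ : ℝ → EuclideanSpace ℝ (Fin d) → EuclideanSpace ℝ (Fin d))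
    (h : ℝ)
    (H : EuclideanSpace ℝ (Fin d) →L[ℝ] EuclideanSpace ℝ (Fin dO))
    (ε : ℝ) (hε : 0 < ε)
    (Ω : Type*) [MeasurableSpace Ω] (μ : Measure Ω)
    (Z : ℕ → Ω → EuclideanSpace ℝ (Fin dO))
    (hZmeas : ∀ i, Measurable (Z i))
    (hZindep : iIndepFun Z μ)
    (hZlaw : ∀ i, Measure.map (Z i) μ =
      (ENNReal.ofReal ((2 * ε) ^ dO))⁻¹ •
        volume.restrict {z : EuclideanSpace ℝ (Fin dO) | ∀ j, |z j| ≤ ε})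
    (q : EuclideanSpace ℝ (Fin d) → ℝ)
    (u : EuclideanSpace ℝ (Fin d))
    (v : EuclideanSpace ℝ (Fin d)) (hv : ‖v‖ ≤ R) (hqv : 0 < q v)
    (k : ℕ) :
    -- (a) lower bound, valid when `ε ≥ M_k(u,v)`
    ((∀ i ≤ k, normInf (H (Ψ (i * h) v) - H (Ψ (i * h) u)) ≤ ε) →
      ENNReal.ofReal (Real.exp
          (-(∑ i ∈ Finset.range (k + 1), norm1 (Ψ (i * h) v - Ψ (i * h) u)) *
            opNorm1 (fun x : EuclideanSpace ℝ (Fin d) => H x) / ε)) ≤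
        μ {ω | v ∈ smootherSupp Ψ H q R h ε u Z k ω}) ∧
    -- (b) upper bound, when `H` is invertible (in particular `d_o = d`)
    (∀ K : EuclideanSpace ℝ (Fin dO) →L[ℝ] EuclideanSpace ℝ (Fin d),
      (∀ x, K (H x) = x) → (∀ y, H (K y) = y) →
      μ {ω | v ∈ smootherSupp Ψ H q R h ε u Z k ω} ≤
        ENNReal.ofReal (Real.exp
          (-(∑ i ∈ Finset.range (k + 1), norm1 (Ψ (i * h) v - Ψ (i * h) u)) /
            (2 * ε * opNorm1 (fun y : EuclideanSpace ℝ (Fin dO) => K y)))))  := by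
  have hlaw : ∀ i, Measure.map (Z i) μ = uniformCube (Fin dO) ε := by
    simpa only [uniformCube, Fintype.card_fin] using hZlaw
  rw [measure_mem_smootherSupp hε hv hqv hZmeas hZindep hlaw]
  set y : ℕ → EuclideanSpace ℝ (Fin d) := fun i => Ψ (i * h) v - Ψ (i * h) u
  refine ⟨fun hM => ofReal_exp_neg_sum_norm1_mul_le_prod _ y H hε fun i hi => ?_,
    fun K hKH _ => prod_le_ofReal_exp_neg_sum_norm1_div _ y H K hKH hε.le⟩
  rw [map_sub]
  exact hM i (Nat.lt_succ_iff.1 (Finset.mem_range.1 hi))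

/-- lower and upper bounds for the probability that a fixed point
`v ∈ B_R` belongs to the support of the smoother, in terms of
`D_k^{(1)}(u,v) = ∑_{i=0}^k ‖Ψ_{t_i}(v) - Ψ_{t_i}(u)‖₁`, for uniform
observation noise on `[-ε, ε]^{d_o}`. -/
theorem prob_in_smoother_support_bounds {d dO : ℕ}
    (A : EuclideanSpace ℝ (Fin d) →L[ℝ] EuclideanSpace ℝ (Fin d))
    (B : EuclideanSpace ℝ (Fin d) →L[ℝ] EuclideanSpace ℝ (Fin d) →L[ℝ] EuclideanSpace ℝ (Fin d))
    (f : EuclideanSpace ℝ (Fin d))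
    (R δ : ℝ) (hR : 0 < R) (hδ : 0 < δ)
    (htrap : ∀ x : EuclideanSpace ℝ (Fin d),
      ‖x‖ ∈ Icc R (R + δ) → (inner ℝ (f - A x - B x x) x : ℝ) ≤ 0)
    (Ψ : ℝ → EuclideanSpace ℝ (Fin d) → EuclideanSpace ℝ (Fin d))
    (hΨ0 : ∀ x, ‖x‖ ≤ R → Ψ 0 x = x)
    (hΨR : ∀ x, ‖x‖ ≤ R → ∀ t : ℝ, 0 ≤ t → ‖Ψ t x‖ ≤ R)
    (hΨode : ∀ x, ‖x‖ ≤ R → ∀ t : ℝ, 0 ≤ t →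
      HasDerivWithinAt (fun s => Ψ s x)
        (f - A (Ψ t x) - B (Ψ t x) (Ψ t x)) (Ici 0) t)
    (h : ℝ) (hh : 0 < h)
    (H : EuclideanSpace ℝ (Fin d) →L[ℝ] EuclideanSpace ℝ (Fin dO))
    (ε : ℝ) (hε : 0 < ε)
    (Ω : Type*) [MeasurableSpace Ω] (μ : Measure Ω) [IsProbabilityMeasure μ]
    (Z : ℕ → Ω → EuclideanSpace ℝ (Fin dO))
    (hZmeas : ∀ i, Measurable (Z i))
    (hZindep : iIndepFun Z μ)
    (hZlaw : ∀ i, Measure.map (Z i) μ =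
      (ENNReal.ofReal ((2 * ε) ^ dO))⁻¹ •
        volume.restrict {z : EuclideanSpace ℝ (Fin dO) | ∀ j, |z j| ≤ ε})
    (q : EuclideanSpace ℝ (Fin d) → ℝ) (hq : ∀ x, 0 ≤ q x)
    (hqsupp : ∀ x : EuclideanSpace ℝ (Fin d), ¬ ‖x‖ ≤ R → q x = 0)
    (u : EuclideanSpace ℝ (Fin d)) (hu : ‖u‖ ≤ R) (hqu : 0 < q u)
    (v : EuclideanSpace ℝ (Fin d)) (hv : ‖v‖ ≤ R) (hqv : 0 < q v)
    (k : ℕ) :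
    -- (a) lower bound, valid when `ε ≥ M_k(u,v)`
    ((∀ i ≤ k, normInf (H (Ψ (i * h) v) - H (Ψ (i * h) u)) ≤ ε) →
      ENNReal.ofReal (Real.exp
          (-(∑ i ∈ Finset.range (k + 1), norm1 (Ψ (i * h) v - Ψ (i * h) u)) *
            opNorm1 (fun x : EuclideanSpace ℝ (Fin d) => H x) / ε)) ≤
        μ {ω | v ∈ smootherSupp Ψ H q R h ε u Z k ω}) ∧
    -- (b) upper bound, when `H` is invertible (in particular `d_o = d`)
    (∀ K : EuclideanSpace ℝ (Fin dO) →L[ℝ] EuclideanSpace ℝ (Fin d),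
      (∀ x, K (H x) = x) → (∀ y, H (K y) = y) →
      μ {ω | v ∈ smootherSupp Ψ H q R h ε u Z k ω} ≤
        ENNReal.ofReal (Real.exp
          (-(∑ i ∈ Finset.range (k + 1), norm1 (Ψ (i * h) v - Ψ (i * h) u)) /
            (2 * ε * opNorm1 (fun y : EuclideanSpace ℝ (Fin dO) => K y))))) :=
  prob_in_smoother_support_bounds_general R Ψ h H ε hε Ω μ Z hZmeas hZindep hZlaw q u v hv hqv k
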